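/- For distinct primes p and q and real numbers τ, τ₀, if p^{iτ} = p^{iτ₀} · u and q^{iτ} = q^{iτ₀} · v where u, v are complex roots of unity of order dividing a fixed N, then (τ − τ₀)·log p and (τ − τ₀)·log q are both in (2π/N)·ℤ; since log p / log q is irrational this forces τ = τ₀. -/
import Mathlib


open Complex Real

lemma twist_lemma (L : ℝ) (τ τ₀ : ℝ) (N : ℕ) (hN : 1 ≤ N) (u : ℂ) (hu : u ^ N = 1)
    (h1 : Complex.exp (Complex.I * τ * (L : ℂ))
        = Complex.exp (Complex.I * τ₀ * (L : ℂ)) * u) :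
    ∃ k : ℤ, (τ - τ₀) * L = (2 * Real.pi / N) * k := by
  have hu' : u = Complex.exp (Complex.I * τ * L - Complex.I * τ₀ * L) := by
    rw [Complex.exp_sub, h1]
    field_simp
  have hexp : Complex.exp ((N : ℂ) * (Complex.I * τ * L - Complex.I * τ₀ * L)) = 1 := by
    rw [Complex.exp_nat_mul, ← hu', hu]
  rw [Complex.exp_eq_one_iff] at hexp
  obtain ⟨n, hn⟩ := hexp
  refine ⟨n, ?_⟩
  have him := congrArg Complex.im hn
  simp [Complex.mul_im, Complex.mul_re] at him
  have hN' : (N : ℝ) ≠ 0 := by positivity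
  field_simp
  nlinarith [him]

lemma no_common_log_rel (p q : ℕ) (hp : p.Prime) (hq : q.Prime) (hpq : p ≠ q)
    (a b : ℕ) (ha : 0 < a)
    (h : (a : ℝ) * Real.log p = (b : ℝ) * Real.log q) : False := by
  have hp0 : (0:ℝ) < p := by exact_mod_cast hp.pos
  have hq0 : (0:ℝ) < q := by exact_mod_cast hq.pos
  have h1 : Real.log ((p:ℝ) ^ a) = Real.log ((q:ℝ) ^ b) := by
    rw [Real.log_pow, Real.log_pow]; exact_mod_cast h
  have h2 : ((p:ℝ) ^ a) = ((q:ℝ) ^ b) :=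
    Real.log_injOn_pos (Set.mem_Ioi.mpr (by positivity)) (Set.mem_Ioi.mpr (by positivity)) h1
  have h3 : p ^ a = q ^ b := by exact_mod_cast h2
  have hdvd : p ∣ q ^ b := h3 ▸ dvd_pow_self p ha.ne'
  exact hpq ((Nat.prime_dvd_prime_iff_eq hp hq).mp (hp.dvd_of_dvd_pow hdvd))

/-- For distinct primes `p`, `q` and reals `τ`, `τ₀`: if `p^{iτ} = p^{iτ₀}·u` and
`q^{iτ} = q^{iτ₀}·v` with `u^N = v^N = 1`, `N ≥ 1`, then `(τ-τ₀)·log p` and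
`(τ-τ₀)·log q` lie in `(2π/N)·ℤ`, and `τ = τ₀`. -/
theorem tau_eq_of_rootOfUnity_twist_two_primes
    (p q : ℕ) (hp : p.Prime) (hq : q.Prime) (hpq : p ≠ q)
    (τ τ₀ : ℝ) (N : ℕ) (hN : 1 ≤ N) (u v : ℂ) (hu : u ^ N = 1) (hv : v ^ N = 1)
    (h1 : Complex.exp (Complex.I * τ * (Real.log p : ℂ))
        = Complex.exp (Complex.I * τ₀ * (Real.log p : ℂ)) * u)
    (h2 : Complex.exp (Complex.I * τ * (Real.log q : ℂ))
        = Complex.exp (Complex.I * τ₀ * (Real.log q : ℂ)) * v) :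
    (∃ k : ℤ, (τ - τ₀) * Real.log p = (2 * Real.pi / N) * k) ∧
    (∃ k : ℤ, (τ - τ₀) * Real.log q = (2 * Real.pi / N) * k) ∧
    τ = τ₀ := by
  obtain ⟨k, hk⟩ := twist_lemma (Real.log p) τ τ₀ N hN u hu h1
  obtain ⟨k', hk'⟩ := twist_lemma (Real.log q) τ τ₀ N hN v hv h2
  refine ⟨⟨k, hk⟩, ⟨k', hk'⟩, ?_⟩
  by_contra hne
  have hδ : τ - τ₀ ≠ 0 := sub_ne_zero.mpr hne
  have hlp : 0 < Real.log p := Real.log_pos (by exact_mod_cast hp.one_lt)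
  have hlq : 0 < Real.log q := Real.log_pos (by exact_mod_cast hq.one_lt)
  have hc : 0 < 2 * Real.pi / N := by
    have hN0 : (0:ℝ) < N := by positivity
    positivity
  have hk'0 : k' ≠ 0 := by
    intro h0
    rw [h0] at hk'
    simp only [Int.cast_zero, mul_zero] at hk'
    rcases mul_eq_zero.mp hk' with h | h
    · exact hδ h
    · exact hlq.ne' h
  -- cross relation: k' * log p = k * log q
  have hcross : (k':ℝ) * Real.log p = (k:ℝ) * Real.log q := by
    have h1' : (τ - τ₀) * Real.log p * k' = (2 * Real.pi / N) * k * k' := by rw [hk]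
    have h2' : (τ - τ₀) * Real.log q * k = (2 * Real.pi / N) * k' * k := by rw [hk']
    have h3 : (τ - τ₀) * (Real.log p * k') = (τ - τ₀) * (Real.log q * k) := by
      nlinarith [h1', h2']
    have h4 := mul_left_cancel₀ hδ h3
    linarith
  -- take absolute values
  have habs : (k'.natAbs : ℝ) * Real.log p = (k.natAbs : ℝ) * Real.log q := by
    have := congrArg (fun x : ℝ => |x|) hcross
    rwa [abs_mul, abs_mul, abs_of_pos hlp, abs_of_pos hlq, ← Int.cast_abs, ← Int.cast_abs,
      Int.abs_eq_natAbs, Int.abs_eq_natAbs, Int.cast_natCast, Int.cast_natCast] at this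
  exact no_common_log_rel p q hp hq hpq k'.natAbs k.natAbs
    (Int.natAbs_pos.mpr hk'0) habs
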